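/- Abstract skeleton of Theorem 1: Let 𝓜 be a finite nonempty set, M₀ ∈ 𝓜, and for each n and each M ∈ 𝓜 let T_{n,M} be a real random variable on a common probability space and a_{n,M} > 0 a real number; set W_{n,M} = T_{n,M} − a_{n,M}. Suppose 𝓜∖{M₀} = N₁ ∪ N₂ where: (i) for every M ∈ N₁ there exist δ_M > 0 and random variables R_{n,M} converging to 0 in probability with (T_{n,M} − T_{n,M₀})/n ≤ −δ_M + R_{n,M} almost surely for each n, and moreover a_{n,M₀}/n → 0 and a_{n,M} ≥ 0; (ii) for every M ∈ N₂, (T_{n,M} − T_{n,M₀})/a_{n,M₀} converges to 0 in probability and liminf_n a_{n,M}/a_{n,M₀} > 1. Then for any sequence of random elements \hat M_n of 𝓜 satisfying W_{n,\hat M_n} = max_{M∈𝓜} W_{n,M} pointwise, P(\hat M_n = M₀) → 1 as n → ∞. -/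

import Mathlib

/-!
Under the selection rule, `M̂ₙ ≠ M₀` forces `W_{n,M₀} ≤ W_{n,M}` for some `M ≠ M₀`, and since `𝓜`
is finite it suffices, by a union bound, that each of these events has vanishing probability.
Such an event says that the random excess `T_{n,M} - T_{n,M₀}` reaches the deterministic
threshold `a_{n,M} - a_{n,M₀}`. For an underfitting `M` the excess drifts to `-∞` at linear
rate while the threshold is `o(n)` from below; for an overfitting `M` the excess is
`o_P(a_{n,M₀})` while the threshold is eventually a positive multiple of `a_{n,M₀}`.
-/

open MeasureTheory Filter
open scoped ProbabilityTheory

/-- A sequence of real random variables converges to `0` in probability. -/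
def TendstoInProbZero {Ω : Type*} [MeasureSpace Ω] (X : ℕ → Ω → ℝ) : Prop :=
  ∀ ε : ℝ, 0 < ε →
    Tendsto (fun n => (ℙ {ω | ε < |X n ω|}).toReal) atTop (nhds 0)

open Topology

section Probability

variable {Ω : Type*} [MeasureSpace Ω]

lemma TendstoInProbZero.tendsto_prob_of_ae_imp [IsFiniteMeasure (ℙ : Measure Ω)]
    {X : ℕ → Ω → ℝ} (hX : TendstoInProbZero X) {ε : ℝ} (hε : 0 < ε) {A : ℕ → Set Ω}
    (hA : ∀ᶠ n in atTop, ∀ᵐ ω, ω ∈ A n → ε < |X n ω|) :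
    Tendsto (fun n => (ℙ (A n)).toReal) atTop (𝓝 0) := by
  refine tendsto_of_tendsto_of_tendsto_of_le_of_le' tendsto_const_nhds (hX ε hε)
    (Eventually.of_forall fun _ => ENNReal.toReal_nonneg) ?_
  filter_upwards [hA] with n hn
  exact ENNReal.toReal_mono (measure_ne_top _ _) (measure_mono_ae hn)

lemma tendsto_prob_le_of_linear_drift [IsFiniteMeasure (ℙ : Measure Ω)]
    {D R : ℕ → Ω → ℝ} {c : ℕ → ℝ} {δ : ℝ} (hδ : 0 < δ) (hR : TendstoInProbZero R)
    (hD : ∀ n, ∀ᵐ ω, D n ω / n ≤ -δ + R n ω) (hc : ∀ᶠ n in atTop, -(δ / 2) < c n / n) :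
    Tendsto (fun n => (ℙ {ω | c n ≤ D n ω}).toReal) atTop (𝓝 0) := by
  refine hR.tendsto_prob_of_ae_imp (half_pos hδ) ?_
  filter_upwards [hc] with n hcn
  filter_upwards [hD n] with ω hDn hcD
  have : c n / n ≤ D n ω / n := div_le_div_of_nonneg_right hcD n.cast_nonneg
  exact (by linarith : δ / 2 < R n ω).trans_le (le_abs_self _)

lemma tendsto_prob_le_of_dominant_threshold [IsFiniteMeasure (ℙ : Measure Ω)]
    {D : ℕ → Ω → ℝ} {b c : ℕ → ℝ} {η : ℝ} (hη : 0 < η) (hb : ∀ n, 0 < b n)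
    (hD : TendstoInProbZero fun n ω => D n ω / b n) (hc : ∀ᶠ n in atTop, η ≤ c n / b n) :
    Tendsto (fun n => (ℙ {ω | c n ≤ D n ω}).toReal) atTop (𝓝 0) := by
  refine hD.tendsto_prob_of_ae_imp (half_pos hη) ?_
  filter_upwards [hc] with n hcn
  refine Eventually.of_forall fun ω hcD => ?_
  have : c n / b n ≤ D n ω / b n := div_le_div_of_nonneg_right hcD (hb n).le
  exact (by linarith : η / 2 < D n ω / b n).trans_le (le_abs_self _)

lemma tendsto_prob_of_tendsto_prob_compl [IsProbabilityMeasure (ℙ : Measure Ω)]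
    {A : ℕ → Set Ω} (h : Tendsto (fun n => (ℙ (A n)ᶜ).toReal) atTop (𝓝 0)) :
    Tendsto (fun n => (ℙ (A n)).toReal) atTop (𝓝 1) := by
  have hlower : ∀ n, 1 - (ℙ (A n)ᶜ).toReal ≤ (ℙ (A n)).toReal := fun n => by
    have := measureReal_union_le (μ := ℙ) (A n) (A n)ᶜ
    rw [Set.union_compl_self, probReal_univ] at this
    exact sub_le_iff_le_add.mpr this
  refine tendsto_of_tendsto_of_tendsto_of_le_of_le ?_ tendsto_const_nhds hlower
    fun _ => measureReal_le_one
  simpa using (tendsto_const_nhds (x := (1 : ℝ))).sub h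

lemma tendsto_prob_argmax_eq [IsProbabilityMeasure (ℙ : Measure Ω)]
    {ι : Type*} [Fintype ι] (i₀ : ι) {W : ℕ → ι → Ω → ℝ} {m : ℕ → Ω → ι}
    (hm : ∀ n ω i, W n i ω ≤ W n (m n ω) ω)
    (h : ∀ i ≠ i₀, Tendsto (fun n => (ℙ {ω | W n i₀ ω ≤ W n i ω}).toReal) atTop (𝓝 0)) :
    Tendsto (fun n => (ℙ {ω | m n ω = i₀}).toReal) atTop (𝓝 1) := by
  classical
  set S := Finset.univ.filter (· ≠ i₀)
  have hunion : ∀ n, (ℙ {ω | m n ω = i₀}ᶜ).toReal ≤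
      ∑ i ∈ S, (ℙ {ω | W n i₀ ω ≤ W n i ω}).toReal := fun n => by
    refine (measureReal_mono (fun ω hω => ?_) (measure_ne_top _ _)).trans (measureReal_biUnion_finset_le S _)
    exact Set.mem_biUnion (by simpa [S] using hω) (hm n ω i₀)
  have hsum : Tendsto (fun n => ∑ i ∈ S, (ℙ {ω | W n i₀ ω ≤ W n i ω}).toReal)
      atTop (𝓝 0) := by
    simpa using tendsto_finsetSum S fun i hi => h i (Finset.mem_filter.mp hi).2
  exact tendsto_prob_of_tendsto_prob_compl <|
    tendsto_of_tendsto_of_tendsto_of_le_of_le tendsto_const_nhds hsum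
      (fun _ => ENNReal.toReal_nonneg) hunion

end Probability

theorem abstract_skeleton_consistency_general
    {Ω : Type*} [MeasureSpace Ω] [IsProbabilityMeasure (ℙ : Measure Ω)]
    {𝓜 : Type*} [Fintype 𝓜] (M₀ : 𝓜)
    (T : ℕ → 𝓜 → Ω → ℝ) (a : ℕ → 𝓜 → ℝ) (ha_pos : ∀ n M, 0 < a n M)
    (W : ℕ → 𝓜 → Ω → ℝ) (hW : ∀ n M ω, W n M ω = T n M ω - a n M)
    (N₁ N₂ : Set 𝓜) (hsplit : {M | M ≠ M₀} = N₁ ∪ N₂)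
    (h₁ : ∀ M ∈ N₁, ∃ δ : ℝ, 0 < δ ∧ ∃ R : ℕ → Ω → ℝ,
      TendstoInProbZero R ∧
      ∀ n : ℕ, ∀ᵐ ω ∂ℙ, (T n M ω - T n M₀ ω) / (n : ℝ) ≤ -δ + R n ω)
    (ha₀ : Tendsto (fun n => a n M₀ / (n : ℝ)) atTop (nhds 0))
    (h₂ : ∀ M ∈ N₂,
      TendstoInProbZero (fun n ω => (T n M ω - T n M₀ ω) / a n M₀) ∧
      1 < Filter.liminf (fun n => a n M / a n M₀) atTop)
    (hatM : ℕ → Ω → 𝓜)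
    (hmax : ∀ n ω M, W n M ω ≤ W n (hatM n ω) ω) :
    Tendsto (fun n => (ℙ {ω | hatM n ω = M₀}).toReal) atTop (nhds 1) := by
  refine tendsto_prob_argmax_eq M₀ hmax fun M hM => ?_
  have hevent : ∀ n, {ω | W n M₀ ω ≤ W n M ω} =
      {ω | a n M - a n M₀ ≤ T n M ω - T n M₀ ω} := fun n => by
    ext ω
    simp only [Set.mem_ofPred_eq, hW]
    constructor <;> intro h <;> linarith
  simp only [hevent]
  rcases (hsplit ▸ hM : M ∈ N₁ ∪ N₂) with hM₁ | hM₂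
  · obtain ⟨δ, hδ, R, hR, hdrift⟩ := h₁ M hM₁
    refine tendsto_prob_le_of_linear_drift hδ hR hdrift ?_
    filter_upwards [ha₀.eventually_lt_const (half_pos hδ)] with n hn
    have : -(a n M₀) / n ≤ (a n M - a n M₀) / n :=
      div_le_div_of_nonneg_right (by linarith [ha_pos n M]) n.cast_nonneg
    rw [neg_div] at this
    linarith
  · obtain ⟨hnoise, hratio⟩ := h₂ M hM₂
    obtain ⟨t, ht₁, htL⟩ := exists_between hratio
    have hbdd : IsBoundedUnder (· ≥ ·) atTop fun n => a n M / a n M₀ :=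
      isBoundedUnder_of ⟨0, fun n => (div_pos (ha_pos n M) (ha_pos n M₀)).le⟩
    refine tendsto_prob_le_of_dominant_threshold (sub_pos.mpr ht₁)
      (fun n => ha_pos n M₀) hnoise ?_
    filter_upwards [eventually_lt_of_lt_liminf htL hbdd] with n hn
    rw [sub_div, div_self (ha_pos n M₀).ne']
    linarith

/-- Abstract skeleton of Theorem 1: a penalized-criterion maximizer over a finite
model set is consistent, given the underestimation and overestimation controls. -/
theorem abstract_skeleton_consistency
    {Ω : Type*} [MeasureSpace Ω] [IsProbabilityMeasure (ℙ : Measure Ω)]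
    {𝓜 : Type*} [Fintype 𝓜] [Nonempty 𝓜] (M₀ : 𝓜)
    (T : ℕ → 𝓜 → Ω → ℝ) (a : ℕ → 𝓜 → ℝ) (ha_pos : ∀ n M, 0 < a n M)
    (W : ℕ → 𝓜 → Ω → ℝ) (hW : ∀ n M ω, W n M ω = T n M ω - a n M)
    (N₁ N₂ : Set 𝓜) (hsplit : {M | M ≠ M₀} = N₁ ∪ N₂)
    (h₁ : ∀ M ∈ N₁, ∃ δ : ℝ, 0 < δ ∧ ∃ R : ℕ → Ω → ℝ,
      TendstoInProbZero R ∧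
      ∀ n : ℕ, ∀ᵐ ω ∂ℙ, (T n M ω - T n M₀ ω) / (n : ℝ) ≤ -δ + R n ω)
    (ha₀ : Tendsto (fun n => a n M₀ / (n : ℝ)) atTop (nhds 0))
    (h₂ : ∀ M ∈ N₂,
      TendstoInProbZero (fun n ω => (T n M ω - T n M₀ ω) / a n M₀) ∧
      1 < Filter.liminf (fun n => a n M / a n M₀) atTop)
    (hatM : ℕ → Ω → 𝓜)
    (hmax : ∀ n ω M, W n M ω ≤ W n (hatM n ω) ω) :
    Tendsto (fun n => (ℙ {ω | hatM n ω = M₀}).toReal) atTop (nhds 1) :=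
  abstract_skeleton_consistency_general M₀ T a ha_pos W hW N₁ N₂ hsplit h₁ ha₀ h₂ hatM hmax
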